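/- In a derived matrix whose nonzero entries are exactly {1,...,N}, each appearing once, with entries strictly increasing along rows and columns, if two entries g and g' (g < g') are adjacent vertically in a column and every integer strictly between g and g' appears in a column strictly to the left, then in the corresponding leveled tree the branches through leaves g, g+1, ..., g' all merge at the level of that column. In particular, a maximal derived-consecutive block of length ℓ in a column corresponds to a single corolla of arity ℓ + 1 at that level. -/
import Mathlib


/-- In a derived matrix whose columns (read left to right) give a partition
`col : Fin s → Finset ℕ` of `{1,...,N}`, where `t ∈ col i` means that the
branches through leaves `t` and `t+1` of the corresponding leveled tree meet
at level `i` (recorded by `level t = i`): if two entries `g < g'` lie in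
column `i` and every integer strictly between them lies in a column strictly
to the left, then the branches through the leaves `g, g+1, ..., g'` have all
merged by level `i`, i.e. `level t ≤ i` for every `g ≤ t < g'`.  In
particular a derived-consecutive block of length `ℓ` in a column corresponds
to a single corolla of arity `ℓ + 1` at that level. -/
theorem derived_consecutive_block_merges (N s : ℕ) (col : Fin s → Finset ℕ)
    (hpart : ∀ t, 1 ≤ t → t ≤ N → ∃! i, t ∈ col i)
    (hsub : ∀ i, ∀ t ∈ col i, 1 ≤ t ∧ t ≤ N)
    (level : ℕ → Fin s)
    (hlevel : ∀ t, 1 ≤ t → t ≤ N → t ∈ col (level t))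
    (i : Fin s) (g g' : ℕ) (hg : g ∈ col i) (hg' : g' ∈ col i) (hlt : g < g')
    (hbetween : ∀ t, g < t → t < g' → ∃ i', i' < i ∧ t ∈ col i') :
    ∀ t, g ≤ t → t < g' → level t ≤ i := by
  intro t hge hltg'
  rcases eq_or_lt_of_le hge with rfl | hgt
  · obtain ⟨h1, h2⟩ := hsub i g hg
    obtain ⟨j, _, huniq⟩ := hpart g h1 h2
    have e1 := huniq _ (hlevel g h1 h2)
    have e2 := huniq _ hg
    rw [e1, ← e2]
  · obtain ⟨i', hi', ht⟩ := hbetween t hgt hltg'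
    obtain ⟨h1, h2⟩ := hsub i' t ht
    obtain ⟨j, _, huniq⟩ := hpart t h1 h2
    have e1 := huniq _ (hlevel t h1 h2)
    have e2 := huniq _ ht
    rw [e1, ← e2]
    exact hi'.le
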